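/- Let G be a live-edge model on a directed graph (V, 𝓔) with monotone nondecreasing submodular utility H (H(∅)=0) in which the edge set 𝓔 is partitioned into groups, each group consisting of at most b edges all emanating from the same tail node; the groups are mutually independent, and within each group either all edges are simultaneously live (with some group-specific probability) or none is. Then for every step limit τ ≥ 1 and every T ⊆ V, Var[R^τ(T)] ≤ 2·b·τ · I^τ(T) · max{I^τ(T), max_{v∈V} I^τ({v})}. -/

import Mathlib

/-!
By induction on the number of steps we prove `Var f ≤ b·τ·K·E f` for the τ-step value `f`,
whenever `K ≥ 0` bounds the influence of every single node (in every subfamily of the groups and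
within τ steps); `K = max (I^τ(T), max_v I^τ({v}))` qualifies by monotonicity.

Only the groups with an edge leaving the seed `S` act in the first step, and since all edges of
a group share their tail, these groups play no further role. Condition on their coins (law of
total variance). Given them, `f` is a (τ-1)-step value from the enlarged seed with these groups
removed, so by induction the conditional variance contributes at most `b·(τ-1)·K·E f`. Flipping
one first-step coin changes the conditional mean `m` by an amount in `[0, b·K]` (monotonicity;
submodularity and the at most `b` new heads), so an Efron–Stein type inequality gives
`Var m ≤ b·K·Σᵢ qᵢ E[Δᵢ f]`, and submodularity again gives `Σᵢ qᵢ E[Δᵢ f] ≤ E f`.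
-/

open Finset

section LiveEdge
variable {V : Type*} [Fintype V] [DecidableEq V]

/-- One step of live-edge diffusion: a node is activated when some live edge leads
to it from an already active node. -/
def estep (E : Finset (V × V)) (A : Finset V) : Finset V :=
  A ∪ Finset.univ.filter (fun v => ∃ u ∈ A, (u, v) ∈ E)

/-- `ereach E S τ` : the set `ρ^τ(E,S)` of nodes reachable from `S` by directed
paths of at most `τ` live edges of `E`. -/
def ereach (E : Finset (V × V)) (S : Finset V) : ℕ → Finset V
  | 0 => S
  | t + 1 => estep E (ereach E S t)

/-- Submodularity of a set function. -/
def SubmodularFn (F : Finset V → ℝ) : Prop :=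
  ∀ A B : Finset V, A ⊆ B → ∀ x ∉ B, F (insert x B) - F B ≤ F (insert x A) - F A

/-- Monotone nondecreasing set function. -/
def MonotoneFn (F : Finset V → ℝ) : Prop :=
  ∀ A B : Finset V, A ⊆ B → F A ≤ F B

end LiveEdge

section BDep
variable {V : Type*} [Fintype V] [DecidableEq V] {ι : Type*} [Fintype ι] [DecidableEq ι]

/-- The set of live edges determined by the group coin flips `co`: a group's edges
are all live when its coin is `true`, and none is live otherwise. -/
def liveOf (grp : ι → Finset (V × V)) (co : ι → Bool) : Finset (V × V) :=
  Finset.univ.biUnion (fun i => if co i then grp i else ∅)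

/-- The probability of the coin-flip outcome `co` when group `i` is live
independently with probability `q i`. -/
noncomputable def coinWeight (q : ι → ℝ) (co : ι → Bool) : ℝ :=
  ∏ i, if co i then q i else 1 - q i

/-- τ-step influence of `S` in the `b`-dependence live-edge model. -/
noncomputable def bInfl (grp : ι → Finset (V × V)) (q : ι → ℝ) (H : Finset V → ℝ)
    (τ : ℕ) (S : Finset V) : ℝ :=
  ∑ co : ι → Bool, coinWeight q co * H (ereach (liveOf grp co) S τ)

/-- Variance of the τ-step reachability value of `S` in the `b`-dependence
live-edge model. -/
noncomputable def bVar (grp : ι → Finset (V × V)) (q : ι → ℝ) (H : Finset V → ℝ)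
    (τ : ℕ) (S : Finset V) : ℝ :=
  ∑ co : ι → Bool, coinWeight q co * (H (ereach (liveOf grp co) S τ) - bInfl grp q H τ S) ^ 2

end BDep

open Function

section Reachability
variable {V : Type*} [Fintype V] [DecidableEq V] {E F : Finset (V × V)} {A B S X : Finset V}

lemma mem_estep {v : V} : v ∈ estep E A ↔ v ∈ A ∨ ∃ u ∈ A, (u, v) ∈ E := by
  simp [estep]

lemma subset_estep (E : Finset (V × V)) (A : Finset V) : A ⊆ estep E A :=
  subset_union_left

lemma estep_mono (hE : E ⊆ F) (hA : A ⊆ B) : estep E A ⊆ estep F B := by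
  intro v
  simp only [mem_estep]
  rintro (hv | ⟨u, hu, he⟩)
  exacts [Or.inl (hA hv), Or.inr ⟨u, hA hu, hE he⟩]

lemma estep_union (E : Finset (V × V)) (A B : Finset V) :
    estep E (A ∪ B) = estep E A ∪ estep E B := by
  ext v
  simp only [mem_estep, mem_union]
  grind

lemma subset_ereach (E : Finset (V × V)) (S : Finset V) (t : ℕ) : S ⊆ ereach E S t := by
  induction t with
  | zero => rfl
  | succ t ih => exact ih.trans (subset_estep _ _)

lemma ereach_mono (hE : E ⊆ F) (hA : A ⊆ B) (t : ℕ) : ereach E A t ⊆ ereach F B t := by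
  induction t with
  | zero => exact hA
  | succ t ih => exact estep_mono hE ih

lemma ereach_mono_steps (E : Finset (V × V)) (S : Finset V) {s t : ℕ} (h : s ≤ t) :
    ereach E S s ⊆ ereach E S t := by
  induction h with
  | refl => rfl
  | step _ ih => exact ih.trans (subset_estep _ _)

lemma ereach_union (E : Finset (V × V)) (A B : Finset V) (t : ℕ) :
    ereach E (A ∪ B) t = ereach E A t ∪ ereach E B t := by
  induction t with
  | zero => rfl
  | succ t ih => simp only [ereach, ih, estep_union]

lemma ereach_empty (E : Finset (V × V)) (t : ℕ) : ereach E ∅ t = ∅ := by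
  induction t with
  | zero => rfl
  | succ t ih => ext v; simp [ereach, ih, mem_estep]

lemma ereach_biUnion {α : Type*} [DecidableEq α] (E : Finset (V × V)) (s : Finset α)
    (P : α → Finset V) (t : ℕ) :
    ereach E (s.biUnion P) t = s.biUnion fun a => ereach E (P a) t := by
  induction s using Finset.induction_on with
  | empty => simp [ereach_empty]
  | insert _ _ _ ih => rw [biUnion_insert, biUnion_insert, ereach_union, ih]

lemma ereach_succ_eq_ereach_estep (E : Finset (V × V)) (S : Finset V) (t : ℕ) :
    ereach E S (t + 1) = ereach E (estep E S) t := by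
  induction t with
  | zero => rfl
  | succ t ih => exact congrArg (estep E) ih

lemma ereach_filter_tail_notMem (h : ∀ e ∈ E, e.1 ∈ S → e.2 ∈ X) (t : ℕ) :
    ereach (E.filter fun e => e.1 ∉ S) X t = ereach E X t := by
  induction t with
  | zero => rfl
  | succ t ih =>
    change estep _ (ereach _ X t) = estep E (ereach E X t)
    rw [ih]
    refine (estep_mono (filter_subset _ _) le_rfl).antisymm fun v hv => ?_
    rcases mem_estep.1 hv with hv | ⟨u, hu, he⟩
    · exact subset_estep _ _ hv
    by_cases huS : u ∈ S
    · exact subset_estep _ _ (subset_ereach E X t (h _ he huS))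
    · exact mem_estep.2 (Or.inr ⟨u, hu, mem_filter.2 ⟨he, huS⟩⟩)

/-- The live edges leaving `S` only lead into `estep E S`, which is already active. -/
lemma ereach_succ_eq_filter (E : Finset (V × V)) (S : Finset V) (t : ℕ) :
    ereach E S (t + 1) = ereach (E.filter fun e => e.1 ∉ S) (estep E S) t := by
  rw [ereach_succ_eq_ereach_estep, ereach_filter_tail_notMem]
  exact fun e he heS => mem_estep.2 (Or.inr ⟨e.1, heS, he⟩)

end Reachability

section Submodular
variable {V : Type*} [DecidableEq V] {H : Finset V → ℝ}

lemma SubmodularFn.sub_le_sub_of_subset (hH : SubmodularFn H) (hmono : MonotoneFn H)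
    {A B : Finset V} (hAB : A ⊆ B) (C : Finset V) :
    H (B ∪ C) - H B ≤ H (A ∪ C) - H A := by
  induction C using Finset.induction_on with
  | empty => simp
  | insert x C _ ih =>
    rw [union_insert, union_insert]
    by_cases hx : x ∈ B ∪ C
    · rw [insert_eq_of_mem hx]
      linarith [hmono _ _ (subset_insert x (A ∪ C))]
    · linarith [hH _ _ (union_subset_union hAB subset_rfl) x hx]

lemma SubmodularFn.sub_le_sum_biUnion {α : Type*} [DecidableEq α] (hH : SubmodularFn H)
    (hmono : MonotoneFn H) (hnn : ∀ S, 0 ≤ H S) (A : Finset V) (s : Finset α)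
    (Q : α → Finset V) :
    H (A ∪ s.biUnion Q) - H A ≤ ∑ a ∈ s, H (Q a) := by
  induction s using Finset.induction_on generalizing A with
  | empty => simp
  | insert a s ha ih =>
    have hQa := hH.sub_le_sub_of_subset hmono (empty_subset A) (Q a)
    rw [empty_union] at hQa
    have hrest := ih (A ∪ Q a)
    rw [biUnion_insert, sum_insert ha, ← union_assoc]
    linarith [hnn ∅]

lemma SubmodularFn.sum_sub_erase_le {α : Type*} [DecidableEq α] (hH : SubmodularFn H)
    (hmono : MonotoneFn H) (B : Finset V) (s : Finset α) (P : α → Finset V) :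
    ∑ a ∈ s, (H (B ∪ s.biUnion P) - H (B ∪ (s.erase a).biUnion P))
      ≤ H (B ∪ s.biUnion P) - H B := by
  induction s using Finset.induction_on generalizing B with
  | empty => simp
  | insert a s ha ih =>
    have hall : B ∪ (insert a s).biUnion P = B ∪ P a ∪ s.biUnion P := by
      rw [biUnion_insert, union_assoc]
    have hterm : ∀ i ∈ s, H (B ∪ (insert a s).biUnion P) - H (B ∪ ((insert a s).erase i).biUnion P)
        = H (B ∪ P a ∪ s.biUnion P) - H (B ∪ P a ∪ (s.erase i).biUnion P) := by
      intro i hi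
      rw [erase_insert_of_ne (ne_of_mem_of_not_mem hi ha).symm, hall, biUnion_insert]
      simp only [union_assoc]
    have ha_term :=
      hH.sub_le_sub_of_subset hmono (subset_union_left (s₁ := B) (s₂ := s.biUnion P)) (P a)
    rw [union_right_comm] at ha_term
    rw [sum_insert ha, sum_congr rfl hterm, erase_insert ha, hall]
    linarith [ih (B ∪ P a)]

end Submodular

section Coins
variable {ι : Type*} {q : ι → ℝ}

section Flip
variable [DecidableEq ι]

noncomputable def avgAt (q : ι → ℝ) (i : ι) (f : (ι → Bool) → ℝ) : (ι → Bool) → ℝ :=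
  fun co => q i * f (update co i true) + (1 - q i) * f (update co i false)

def flipDiff (i : ι) (f : (ι → Bool) → ℝ) : (ι → Bool) → ℝ :=
  fun co => f (update co i true) - f (update co i false)

lemma avgAt_mem_Icc (hq0 : ∀ i, 0 ≤ q i) (hq1 : ∀ i, q i ≤ 1) {i : ι} {f : (ι → Bool) → ℝ}
    {a c : ℝ} (hf : ∀ co, f co ∈ Set.Icc a c) (co : ι → Bool) : avgAt q i f co ∈ Set.Icc a c := by
  obtain ⟨h1, h2⟩ := hf (update co i true)
  obtain ⟨h3, h4⟩ := hf (update co i false)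
  constructor <;> simp only [avgAt] <;> nlinarith [hq0 i, hq1 i]

lemma flipDiff_avgAt {i j : ι} (hji : j ≠ i) (f : (ι → Bool) → ℝ) :
    flipDiff j (avgAt q i f) = avgAt q i (flipDiff j f) := by
  funext co
  simp only [flipDiff, avgAt, update_comm hji]
  ring

lemma dependsOn_avgAt {i : ι} {s : Finset ι} {f : (ι → Bool) → ℝ}
    (hf : DependsOn f ↑(insert i s)) : DependsOn (avgAt q i f) ↑s := by
  intro co co' h
  have hb (b : Bool) : f (update co i b) = f (update co' i b) := hf fun j hj => by
    rcases eq_or_ne j i with rfl | hji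
    · simp
    · simp only [update_of_ne hji]
      exact h j (by simpa [hji] using hj)
  simp only [avgAt, hb]

lemma piecewise_insert_update {i : ι} {s : Finset ι} (hi : i ∉ s) (co σ : ι → Bool) (b : Bool) :
    (insert i s).piecewise (update co i b) σ = update (s.piecewise co σ) i b := by
  ext j
  rcases eq_or_ne j i with rfl | hji
  · simp
  · simp [Finset.piecewise, hji]

lemma filter_update_true {s : Finset ι} {i : ι} (hi : i ∈ s) (co : ι → Bool) :
    {j ∈ s | update co i true j = true} = insert i ({j ∈ s | co j = true}.erase i) := by
  ext j
  rcases eq_or_ne j i with rfl | hji <;> simp [*]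

lemma filter_update_false (s : Finset ι) (i : ι) (co : ι → Bool) :
    {j ∈ s | update co i false j = true} = {j ∈ s | co j = true}.erase i := by
  ext j
  rcases eq_or_ne j i with rfl | hji <;> simp [*]

end Flip

variable [Fintype ι]

lemma coinWeight_nonneg (hq0 : ∀ i, 0 ≤ q i) (hq1 : ∀ i, q i ≤ 1) (co : ι → Bool) :
    0 ≤ coinWeight q co :=
  prod_nonneg fun i _ => by split <;> linarith [hq0 i, hq1 i]

variable [DecidableEq ι]

noncomputable def coinExp (q : ι → ℝ) (f : (ι → Bool) → ℝ) : ℝ :=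
  ∑ co, coinWeight q co * f co

noncomputable def coinVar (q : ι → ℝ) (f : (ι → Bool) → ℝ) : ℝ :=
  coinExp q fun co => (f co - coinExp q f) ^ 2

lemma sum_coinWeight (q : ι → ℝ) : ∑ co, coinWeight q co = 1 := by
  simp only [coinWeight]
  rw [← Fintype.prod_sum (fun i (b : Bool) => if b then q i else 1 - q i)]
  simp

lemma coinExp_add (f g : (ι → Bool) → ℝ) :
    coinExp q (fun co => f co + g co) = coinExp q f + coinExp q g := by
  simp only [coinExp, mul_add, sum_add_distrib]

lemma coinExp_sub (f g : (ι → Bool) → ℝ) :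
    coinExp q (fun co => f co - g co) = coinExp q f - coinExp q g := by
  simp only [coinExp, mul_sub, sum_sub_distrib]

lemma coinExp_const_mul (c : ℝ) (f : (ι → Bool) → ℝ) :
    coinExp q (fun co => c * f co) = c * coinExp q f := by
  simp only [coinExp, mul_sum, mul_left_comm]

lemma coinExp_sum {α : Type*} (s : Finset α) (f : α → (ι → Bool) → ℝ) :
    coinExp q (fun co => ∑ a ∈ s, f a co) = ∑ a ∈ s, coinExp q (f a) := by
  simp only [coinExp, mul_sum]
  exact sum_comm

lemma coinExp_const (c : ℝ) : coinExp q (fun _ => c) = c := by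
  simp only [coinExp, ← sum_mul, sum_coinWeight, one_mul]

lemma coinExp_mono (hq0 : ∀ i, 0 ≤ q i) (hq1 : ∀ i, q i ≤ 1) {f g : (ι → Bool) → ℝ}
    (h : ∀ co, f co ≤ g co) : coinExp q f ≤ coinExp q g :=
  sum_le_sum fun co _ => mul_le_mul_of_nonneg_left (h co) (coinWeight_nonneg hq0 hq1 co)

lemma coinExp_nonneg (hq0 : ∀ i, 0 ≤ q i) (hq1 : ∀ i, q i ≤ 1) {f : (ι → Bool) → ℝ}
    (h : ∀ co, 0 ≤ f co) : 0 ≤ coinExp q f := by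
  simpa only [coinExp_const] using coinExp_mono hq0 hq1 (f := fun _ => 0) h

lemma coinVar_eq (f : (ι → Bool) → ℝ) :
    coinVar q f = coinExp q (fun co => f co ^ 2) - coinExp q f ^ 2 := by
  have hpt : (fun co => (f co - coinExp q f) ^ 2)
      = fun co => f co ^ 2 - 2 * coinExp q f * f co + coinExp q f ^ 2 := by
    funext co; ring
  rw [coinVar, hpt, coinExp_add, coinExp_sub, coinExp_const_mul, coinExp_const]
  ring

lemma coinVar_const (c : ℝ) : coinVar q (fun _ => c) = 0 := by
  simp [coinVar, coinExp_const]

/-- The conditional expectation of `f` given the coins outside `s`, which are those of `σ`. -/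
noncomputable def avgOn (q : ι → ℝ) (s : Finset ι) (f : (ι → Bool) → ℝ) : (ι → Bool) → ℝ :=
  fun σ => coinExp q fun co => f (s.piecewise co σ)

lemma coinWeight_update (co : ι → Bool) (i : ι) (b : Bool) :
    coinWeight q (update co i b) =
      (if b then q i else 1 - q i) * ∏ j ∈ univ.erase i, if co j then q j else 1 - q j := by
  rw [coinWeight, ← mul_prod_erase univ _ (mem_univ i), update_self]
  congr 1
  exact prod_congr rfl fun j hj => by rw [update_of_ne (ne_of_mem_erase hj)]

lemma sum_update_true_add_update_false (i : ι) (F : (ι → Bool) → ℝ) :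
    ∑ co, (F (update co i true) + F (update co i false)) = 2 * ∑ co, F co := by
  have hflip : ∑ co, F (update co i (!co i)) = ∑ co, F co :=
    Fintype.sum_bijective _ (Involutive.bijective fun co => by simp) _ _ fun _ => rfl
  rw [two_mul]
  nth_rw 1 [← hflip]
  rw [← sum_add_distrib]
  refine sum_congr rfl fun co _ => ?_
  have hco := update_eq_self i co
  cases h : co i <;> rw [h] at hco <;> simp [hco, add_comm]

lemma coinExp_avgAt (i : ι) (f : (ι → Bool) → ℝ) : coinExp q (avgAt q i f) = coinExp q f := by
  have hsum (F : (ι → Bool) → ℝ) :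
      ∑ co, F co = (∑ co, (F (update co i true) + F (update co i false))) / 2 := by
    rw [sum_update_true_add_update_false]; ring
  rw [coinExp, coinExp, hsum, hsum (fun co => coinWeight q co * f co)]
  congr 1
  refine sum_congr rfl fun co _ => ?_
  simp only [avgAt, update_idem, coinWeight_update, if_true, Bool.false_eq_true, if_false]
  ring

lemma coinVar_eq_coinVar_avgAt_add (i : ι) (f : (ι → Bool) → ℝ) :
    coinVar q f = coinVar q (avgAt q i f)
      + q i * (1 - q i) * coinExp q (fun co => flipDiff i f co ^ 2) := by
  have hpt : avgAt q i (fun co => f co ^ 2)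
      = fun co => avgAt q i f co ^ 2 + q i * (1 - q i) * flipDiff i f co ^ 2 := by
    funext co; simp only [avgAt, flipDiff]; ring
  rw [coinVar_eq, coinVar_eq, coinExp_avgAt, ← coinExp_avgAt i (fun co => f co ^ 2), hpt,
    coinExp_add, coinExp_const_mul]
  ring

/-- An Efron–Stein type inequality. -/
theorem coinVar_le_of_flipDiff_mem_Icc (hq0 : ∀ i, 0 ≤ q i) (hq1 : ∀ i, q i ≤ 1) {c : ℝ}
    {s : Finset ι} {f : (ι → Bool) → ℝ} (hf : DependsOn f ↑s)
    (hD : ∀ i ∈ s, ∀ co, flipDiff i f co ∈ Set.Icc 0 c) :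
    coinVar q f ≤ c * ∑ i ∈ s, q i * coinExp q (flipDiff i f) := by
  induction s using Finset.induction_on generalizing f with
  | empty =>
    have hconst : f = fun _ => f fun _ => false :=
      funext fun co => DependsOn.empty (by simpa using hf) co _
    rw [hconst, coinVar_const]
    simp
  | insert i s hi ih =>
    have hji : ∀ j ∈ s, j ≠ i := fun j hj => ne_of_mem_of_not_mem hj hi
    have hsq : coinExp q (fun co => flipDiff i f co ^ 2) ≤ c * coinExp q (flipDiff i f) := by
      rw [← coinExp_const_mul]
      refine coinExp_mono hq0 hq1 fun co => ?_
      obtain ⟨h0, hc⟩ := hD i (mem_insert_self i s) co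
      nlinarith
    have hsq0 := coinExp_nonneg hq0 hq1 fun co => sq_nonneg (flipDiff i f co)
    have hrest := ih (dependsOn_avgAt hf) fun j hj co => by
      rw [flipDiff_avgAt (hji j hj)]
      exact avgAt_mem_Icc hq0 hq1 (hD j (mem_insert_of_mem hj)) co
    rw [sum_congr rfl fun j hj => by rw [flipDiff_avgAt (hji j hj), coinExp_avgAt]] at hrest
    have hquad : q i * (1 - q i) * coinExp q (fun co => flipDiff i f co ^ 2)
        ≤ c * (q i * coinExp q (flipDiff i f)) := by
      nlinarith [mul_nonneg (hq0 i) (sub_nonneg.2 hsq), mul_nonneg (sq_nonneg (q i)) hsq0]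
    rw [coinVar_eq_coinVar_avgAt_add i, sum_insert hi]
    linarith

lemma avgOn_insert {i : ι} {s : Finset ι} (hi : i ∉ s) (f : (ι → Bool) → ℝ) :
    avgOn q (insert i s) f = avgOn q s (avgAt q i f) := by
  funext σ
  simp only [avgOn]
  rw [← coinExp_avgAt i]
  congr 1
  funext co
  simp only [avgAt, piecewise_insert_update hi]

lemma coinExp_avgOn (s : Finset ι) (f : (ι → Bool) → ℝ) :
    coinExp q (avgOn q s f) = coinExp q f := by
  induction s using Finset.induction_on generalizing f with
  | empty =>
    congr 1
    funext σ
    simp [avgOn, coinExp_const]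
  | insert i s hi ih => rw [avgOn_insert hi, ih, coinExp_avgAt]

lemma avgOn_of_dependsOn {s : Finset ι} {f : (ι → Bool) → ℝ} (hf : DependsOn f ↑s)
    (σ : ι → Bool) : avgOn q s f σ = coinExp q f :=
  congrArg (coinExp q) <| funext fun _ => hf fun _ hj => piecewise_eq_of_mem _ _ _ hj

lemma flipDiff_avgOn {i : ι} {s : Finset ι} (hi : i ∉ s) (f : (ι → Bool) → ℝ) :
    flipDiff i (avgOn q s f) = avgOn q s (flipDiff i f) := by
  funext σ
  simp only [flipDiff, avgOn, ← coinExp_sub, ← update_piecewise_of_notMem _ _ _ hi]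

lemma dependsOn_avgOn (s : Finset ι) (f : (ι → Bool) → ℝ) :
    DependsOn (avgOn q s f) ↑sᶜ := fun σ σ' h =>
  congrArg (coinExp q) <| funext fun _ => congrArg f <|
    piecewise_congr _ (fun _ _ => rfl) fun j hj => h j (by simpa using hj)

/-- The law of total variance. -/
theorem coinVar_eq_coinVar_avgOn_add (s : Finset ι) (f : (ι → Bool) → ℝ) :
    coinVar q f = coinVar q (avgOn q s f)
      + coinExp q (fun σ => coinVar q fun co => f (s.piecewise co σ)) := by
  have hσ (σ : ι → Bool) : coinVar q (fun co => f (s.piecewise co σ))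
      = avgOn q s (fun co => f co ^ 2) σ - avgOn q s f σ ^ 2 := coinVar_eq _
  simp only [hσ, coinExp_sub, coinExp_avgOn, coinVar_eq]
  ring

lemma sum_mul_coinExp_flipDiff_le (hq0 : ∀ i, 0 ≤ q i) (hq1 : ∀ i, q i ≤ 1) (s : Finset ι)
    {f : (ι → Bool) → ℝ}
    (hf : ∀ co, ∑ i ∈ s with co i = true, (f co - f (update co i false)) ≤ f co) :
    ∑ i ∈ s, q i * coinExp q (flipDiff i f) ≤ coinExp q f := by
  set φ : ι → (ι → Bool) → ℝ := fun i co => if co i then f co - f (update co i false) else 0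
  have hφ (i : ι) : q i * coinExp q (flipDiff i f) = coinExp q (φ i) := by
    rw [← coinExp_avgAt i (φ i), ← coinExp_const_mul]
    congr 1
    funext co
    simp [φ, avgAt, flipDiff]
  rw [sum_congr rfl fun i _ => hφ i, ← coinExp_sum]
  exact coinExp_mono hq0 hq1 fun co => by simpa only [φ, ← sum_filter] using hf co

end Coins

section Model
variable {V : Type*} [DecidableEq V] {ι : Type*} {g g' : ι → Finset (V × V)} {S : Finset V}

def heads (g : ι → Finset (V × V)) (i : ι) : Finset V := (g i).image Prod.snd

def dropFrom (g : ι → Finset (V × V)) (S : Finset V) : ι → Finset (V × V) :=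
  fun i => (g i).filter fun e => e.1 ∉ S

lemma dropFrom_le : dropFrom g S ≤ g := fun _ => filter_subset _ _

variable [Fintype ι] {co co' : ι → Bool}

lemma mem_liveOf {e : V × V} : e ∈ liveOf g co ↔ ∃ i, co i = true ∧ e ∈ g i := by
  simp only [liveOf, mem_biUnion, mem_univ, true_and]
  exact exists_congr fun i => by split <;> simp [*]

lemma liveOf_mono (h : g' ≤ g) (co : ι → Bool) : liveOf g' co ⊆ liveOf g co := fun e he => by
  obtain ⟨i, hi, he⟩ := mem_liveOf.1 he
  exact mem_liveOf.2 ⟨i, hi, h i he⟩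

lemma liveOf_congr (h : ∀ i, g i ≠ ∅ → co i = co' i) : liveOf g co = liveOf g co' :=
  biUnion_congr rfl fun i _ => by by_cases hi : g i = ∅ <;> simp [hi, h]

lemma filter_liveOf (p : V × V → Prop) [DecidablePred p] (co : ι → Bool) :
    (liveOf g co).filter p = liveOf (fun i => (g i).filter p) co := by
  simp only [liveOf, filter_biUnion]
  exact biUnion_congr rfl fun i _ => by split <;> simp

/-- The groups that can act in the first step from `S`. -/
def stageOne (g : ι → Finset (V × V)) (S : Finset V) : Finset ι :=
  {i | ∃ e ∈ g i, e.1 ∈ S}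

section Tails
variable (htail : ∀ i, ∃ u : V, ∀ e ∈ g i, e.1 = u)
include htail

lemma dropFrom_eq_empty {i : ι} (hi : i ∈ stageOne g S) : dropFrom g S i = ∅ := by
  obtain ⟨e, he, heS⟩ := (mem_filter.1 hi).2
  obtain ⟨u, hu⟩ := htail i
  exact filter_eq_empty_iff.2 fun e' he' => by rw [hu e' he', ← hu e he]; exact not_not.2 heS

variable [Fintype V] {H : Finset V → ℝ}

noncomputable def reachValue (g : ι → Finset (V × V)) (H : Finset V → ℝ) (S : Finset V)
    (t : ℕ) : (ι → Bool) → ℝ :=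
  fun co => H (ereach (liveOf g co) S t)

lemma estep_liveOf (co : ι → Bool) :
    estep (liveOf g co) S = S ∪ {i ∈ stageOne g S | co i = true}.biUnion (heads g) := by
  ext v
  simp only [mem_estep, mem_liveOf, mem_union, mem_biUnion, mem_filter, stageOne, heads,
    mem_univ, true_and, mem_image]
  refine or_congr_right ⟨?_, ?_⟩
  · rintro ⟨u, hu, i, hi, he⟩
    exact ⟨i, ⟨⟨_, he, hu⟩, hi⟩, _, he, rfl⟩
  · rintro ⟨i, ⟨⟨e, he, heS⟩, hi⟩, e', he', rfl⟩
    obtain ⟨u, hu⟩ := htail i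
    exact ⟨e'.1, hu e' he' ▸ hu e he ▸ heS, i, hi, he'⟩

lemma reachValue_dropFrom_congr (h : ∀ i ∉ stageOne g S, co i = co' i) (X : Finset V) (t : ℕ) :
    reachValue (dropFrom g S) H X t co = reachValue (dropFrom g S) H X t co' := by
  rw [reachValue, reachValue, liveOf_congr fun i hi => h i (mt (dropFrom_eq_empty htail) hi)]

lemma reachValue_succ (t : ℕ) (co : ι → Bool) :
    reachValue g H S (t + 1) co = reachValue (dropFrom g S) H
      (S ∪ {i ∈ stageOne g S | co i = true}.biUnion (heads g)) t co := by
  rw [reachValue, ereach_succ_eq_filter, filter_liveOf, estep_liveOf htail]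
  rfl

end Tails

end Model

section Step
variable {V : Type*} [Fintype V] [DecidableEq V] {ι : Type*} [Fintype ι] [DecidableEq ι]
  {g : ι → Finset (V × V)} {q : ι → ℝ} {H : Finset V → ℝ} {S : Finset V} {t : ℕ}

section Tails
variable (htail : ∀ i, ∃ u : V, ∀ e ∈ g i, e.1 = u)
include htail

lemma dependsOn_reachValue_dropFrom (X : Finset V) (t : ℕ) :
    DependsOn (reachValue (dropFrom g S) H X t) ↑(stageOne g S)ᶜ := fun _ _ h =>
  reachValue_dropFrom_congr htail (fun i hi => h i (by simpa using hi)) X t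

lemma reachValue_succ_piecewise (σ : ι → Bool) :
    (fun co => reachValue g H S (t + 1) ((stageOne g S)ᶜ.piecewise co σ))
      = reachValue (dropFrom g S) H (S ∪ {i ∈ stageOne g S | σ i = true}.biUnion (heads g)) t := by
  funext co
  have hlive : {i ∈ stageOne g S | (stageOne g S)ᶜ.piecewise co σ i = true}
      = {i ∈ stageOne g S | σ i = true} :=
    filter_congr fun i hi => by rw [piecewise_eq_of_notMem _ _ _ (by simpa using hi)]
  rw [reachValue_succ htail, hlive]
  exact reachValue_dropFrom_congr htail
    (fun i hi => piecewise_eq_of_mem _ _ _ (by simpa using hi)) _ _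

lemma reachValue_succ_update {i : ι} (hi : i ∈ stageOne g S) (co : ι → Bool) (b : Bool) :
    reachValue g H S (t + 1) (update co i b)
      = H (ereach (liveOf (dropFrom g S) co) S t ∪
          {j ∈ stageOne g S | update co i b j = true}.biUnion
            fun j => ereach (liveOf (dropFrom g S) co) (heads g j) t) := by
  rw [reachValue_succ htail, reachValue_dropFrom_congr htail (co' := co)
    (fun j hj => update_of_ne (by rintro rfl; exact hj hi) _ _), reachValue, ereach_union,
    ereach_biUnion]

variable (hHnn : ∀ S, 0 ≤ H S) (hHmono : MonotoneFn H) (hHsub : SubmodularFn H)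
include hHnn hHmono hHsub

lemma flipDiff_reachValue_succ_mem_Icc {i : ι} (hi : i ∈ stageOne g S) (co : ι → Bool) :
    flipDiff i (reachValue g H S (t + 1)) co
      ∈ Set.Icc 0 (∑ v ∈ heads g i, reachValue (dropFrom g S) H {v} t co) := by
  set E := liveOf (dropFrom g S) co
  set A := ereach E S t ∪
    ({j ∈ stageOne g S | co j = true}.erase i).biUnion fun j => ereach E (heads g j) t
  have hD : flipDiff i (reachValue g H S (t + 1)) co = H (A ∪ ereach E (heads g i) t) - H A := by
    rw [flipDiff, reachValue_succ_update htail hi, reachValue_succ_update htail hi,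
      filter_update_true hi, filter_update_false, biUnion_insert, union_left_comm, union_comm]
  have hR : ereach E (heads g i) t = (heads g i).biUnion fun v => ereach E {v} t := by
    rw [← ereach_biUnion, biUnion_singleton_eq_self]
  rw [hD]
  exact ⟨sub_nonneg.2 (hHmono _ _ subset_union_left),
    hR ▸ hHsub.sub_le_sum_biUnion hHmono hHnn A (heads g i) fun v => ereach E {v} t⟩

lemma sum_sub_reachValue_succ_update_le (co : ι → Bool) :
    ∑ i ∈ stageOne g S with co i = true,
        (reachValue g H S (t + 1) co - reachValue g H S (t + 1) (update co i false))
      ≤ reachValue g H S (t + 1) co := by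
  set E := liveOf (dropFrom g S) co
  set L := {j ∈ stageOne g S | co j = true}
  set B := ereach E S t
  set R : ι → Finset V := fun j => ereach E (heads g j) t
  have hco : reachValue g H S (t + 1) co = H (B ∪ L.biUnion R) := by
    rw [reachValue_succ htail, reachValue, ereach_union, ereach_biUnion]
  have hupd : ∀ i ∈ L,
      reachValue g H S (t + 1) (update co i false) = H (B ∪ (L.erase i).biUnion R) :=
    fun i hi => by rw [reachValue_succ_update htail (mem_filter.1 hi).1, filter_update_false]
  calc ∑ i ∈ L, (reachValue g H S (t + 1) co - reachValue g H S (t + 1) (update co i false))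
      = ∑ i ∈ L, (H (B ∪ L.biUnion R) - H (B ∪ (L.erase i).biUnion R)) :=
        sum_congr rfl fun i hi => by rw [hco, hupd i hi]
    _ ≤ H (B ∪ L.biUnion R) - H B := hHsub.sum_sub_erase_le hHmono B L R
    _ ≤ reachValue g H S (t + 1) co := by rw [hco]; linarith [hHnn B]

variable (hq0 : ∀ i, 0 ≤ q i) (hq1 : ∀ i, q i ≤ 1)
include hq0 hq1

/-- The part of the variance explained by the first step. -/
lemma coinVar_avgOn_reachValue_succ_le {b : ℕ} (hcard : ∀ i, #(g i) ≤ b) {K : ℝ} (hK0 : 0 ≤ K)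
    (hK : ∀ v, coinExp q (reachValue (dropFrom g S) H {v} t) ≤ K) :
    coinVar q (avgOn q (stageOne g S)ᶜ (reachValue g H S (t + 1)))
      ≤ b * K * coinExp q (reachValue g H S (t + 1)) := by
  set f := reachValue g H S (t + 1)
  set S₁ := stageOne g S
  have hnot : ∀ i ∈ S₁, i ∉ S₁ᶜ := fun i hi => by simpa using hi
  have hD : ∀ i ∈ S₁, ∀ σ, flipDiff i (avgOn q S₁ᶜ f) σ ∈ Set.Icc 0 (b * K) := by
    intro i hi σ
    have hIcc := flipDiff_reachValue_succ_mem_Icc (t := t) htail hHnn hHmono hHsub hi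
    rw [flipDiff_avgOn (hnot i hi)]
    refine ⟨coinExp_nonneg hq0 hq1 fun co => (hIcc _).1, ?_⟩
    calc avgOn q S₁ᶜ (flipDiff i f) σ
        ≤ ∑ v ∈ heads g i, avgOn q S₁ᶜ (reachValue (dropFrom g S) H {v} t) σ := by
          simp only [avgOn, ← coinExp_sum]
          exact coinExp_mono hq0 hq1 fun co => (hIcc _).2
      _ = ∑ v ∈ heads g i, coinExp q (reachValue (dropFrom g S) H {v} t) :=
          sum_congr rfl fun v _ => avgOn_of_dependsOn (dependsOn_reachValue_dropFrom htail _ _) σ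
      _ ≤ #(heads g i) * K := by
          rw [← nsmul_eq_mul]
          exact sum_le_card_nsmul _ _ _ fun v _ => hK v
      _ ≤ b * K := by
          gcongr
          exact_mod_cast card_image_le.trans (hcard i)
  have hdep : DependsOn (avgOn q S₁ᶜ f) ↑S₁ := by simpa using dependsOn_avgOn (q := q) S₁ᶜ f
  calc coinVar q (avgOn q S₁ᶜ f)
      ≤ b * K * ∑ i ∈ S₁, q i * coinExp q (flipDiff i (avgOn q S₁ᶜ f)) :=
        coinVar_le_of_flipDiff_mem_Icc hq0 hq1 hdep hD
    _ = b * K * ∑ i ∈ S₁, q i * coinExp q (flipDiff i f) := by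
        rw [sum_congr rfl fun i hi => by rw [flipDiff_avgOn (hnot i hi), coinExp_avgOn]]
    _ ≤ b * K * coinExp q f := by
        gcongr
        exact sum_mul_coinExp_flipDiff_le hq0 hq1 _
          (sum_sub_reachValue_succ_update_le htail hHnn hHmono hHsub)

end Tails

end Step

section Variance
variable {V : Type*} [Fintype V] [DecidableEq V] {ι : Type*} [Fintype ι] [DecidableEq ι]
  {q : ι → ℝ} {H : Finset V → ℝ}

lemma coinExp_reachValue_mono (hq0 : ∀ i, 0 ≤ q i) (hq1 : ∀ i, q i ≤ 1) (hHmono : MonotoneFn H)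
    {g g' : ι → Finset (V × V)} (hg : g' ≤ g) (X : Finset V) {s t : ℕ} (hst : s ≤ t) :
    coinExp q (reachValue g' H X s) ≤ coinExp q (reachValue g H X t) :=
  coinExp_mono hq0 hq1 fun co => hHmono _ _ <|
    (ereach_mono (liveOf_mono hg co) subset_rfl s).trans (ereach_mono_steps _ _ hst)

theorem coinVar_reachValue_le (hq0 : ∀ i, 0 ≤ q i) (hq1 : ∀ i, q i ≤ 1) (hHnn : ∀ S, 0 ≤ H S)
    (hHmono : MonotoneFn H) (hHsub : SubmodularFn H) {g : ι → Finset (V × V)}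
    (htail : ∀ i, ∃ u : V, ∀ e ∈ g i, e.1 = u) {b : ℕ} (hcard : ∀ i, #(g i) ≤ b) {K : ℝ}
    (hK0 : 0 ≤ K) (t : ℕ) (hK : ∀ g' ≤ g, ∀ s ≤ t, ∀ v, coinExp q (reachValue g' H {v} s) ≤ K)
    (S : Finset V) :
    coinVar q (reachValue g H S t) ≤ b * t * K * coinExp q (reachValue g H S t) := by
  induction t generalizing g S with
  | zero =>
    rw [show reachValue g H S 0 = fun _ => H S from rfl, coinVar_const]
    simp
  | succ t ih =>
    have hdrop : dropFrom g S ≤ g := dropFrom_le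
    have hcond : coinExp q (fun σ => coinVar q fun co =>
          reachValue g H S (t + 1) ((stageOne g S)ᶜ.piecewise co σ))
        ≤ b * t * K * coinExp q (reachValue g H S (t + 1)) := by
      rw [← coinExp_avgOn (stageOne g S)ᶜ (reachValue g H S (t + 1)), ← coinExp_const_mul]
      refine coinExp_mono hq0 hq1 fun σ => ?_
      rw [avgOn, reachValue_succ_piecewise htail]
      exact ih (fun i => (htail i).imp fun u hu e he => hu e (hdrop i he))
        (fun i => (card_le_card (hdrop i)).trans (hcard i))
        (fun g' hg' s hs => hK g' (hg'.trans hdrop) s (hs.trans t.le_succ)) _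
    have hmean := coinVar_avgOn_reachValue_succ_le htail hHnn hHmono hHsub hq0 hq1 hcard hK0
      (hK _ hdrop t t.le_succ)
    rw [coinVar_eq_coinVar_avgOn_add (stageOne g S)ᶜ]
    push_cast
    linarith

end Variance

section BDep
variable {V : Type*} [Fintype V] [DecidableEq V] {ι : Type*} [Fintype ι] [DecidableEq ι]

theorem bdependence_variance_bound_general
    (grp : ι → Finset (V × V)) (b : ℕ)
    (hcard : ∀ i, (grp i).card ≤ b)
    (htail : ∀ i, ∃ t : V, ∀ e ∈ grp i, e.1 = t)
    (q : ι → ℝ) (hq0 : ∀ i, 0 ≤ q i) (hq1 : ∀ i, q i ≤ 1)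
    (H : Finset V → ℝ) (hHnn : ∀ S, 0 ≤ H S)
    (hHmono : MonotoneFn H) (hHsub : SubmodularFn H)
    (τ : ℕ) (T : Finset V) :
    bVar grp q H τ T ≤
      2 * (b : ℝ) * (τ : ℝ) * bInfl grp q H τ T *
        max (bInfl grp q H τ T) (⨆ v : V, bInfl grp q H τ {v}) := by
  set μ := bInfl grp q H τ T
  set K := max μ (⨆ v : V, bInfl grp q H τ {v})
  have hμ : 0 ≤ μ := coinExp_nonneg hq0 hq1 fun _ => hHnn _
  have hK0 : 0 ≤ K := le_max_of_le_left hμ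
  have hK : ∀ g ≤ grp, ∀ s ≤ τ, ∀ v, coinExp q (reachValue g H {v} s) ≤ K := fun g hg s hs v =>
    (coinExp_reachValue_mono hq0 hq1 hHmono hg {v} hs).trans <| le_max_of_le_right <|
      le_ciSup (f := fun v => bInfl grp q H τ {v}) (Set.finite_range _).bddAbove v
  have hvar : bVar grp q H τ T ≤ b * τ * K * μ :=
    coinVar_reachValue_le hq0 hq1 hHnn hHmono hHsub htail hcard hK0 τ hK T
  have hprod : 0 ≤ (b : ℝ) * τ * K * μ := by positivity
  linarith

/-- **Variance bound for live-edge models with `b`-dependence.**  If the edges of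
`𝓔` are partitioned into mutually independent all-or-nothing groups `grp i`, each
of at most `b` edges sharing the same tail node, then for every `τ ≥ 1` and every
`T ⊆ V`, `Var[R^τ(T)] ≤ 2·b·τ·I^τ(T)·max{I^τ(T), max_v I^τ({v})}`. -/
theorem bdependence_variance_bound
    (𝓔 : Finset (V × V)) (grp : ι → Finset (V × V)) (b : ℕ) (hb : 1 ≤ b)
    (hdisj : ∀ i j, i ≠ j → Disjoint (grp i) (grp j))
    (hcover : Finset.univ.biUnion grp = 𝓔)
    (hcard : ∀ i, (grp i).card ≤ b)
    (htail : ∀ i, ∃ t : V, ∀ e ∈ grp i, e.1 = t)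
    (q : ι → ℝ) (hq0 : ∀ i, 0 ≤ q i) (hq1 : ∀ i, q i ≤ 1)
    (H : Finset V → ℝ) (hH0 : H ∅ = 0) (hHnn : ∀ S, 0 ≤ H S)
    (hHmono : MonotoneFn H) (hHsub : SubmodularFn H)
    (τ : ℕ) (hτ : 1 ≤ τ) (T : Finset V) :
    bVar grp q H τ T ≤
      2 * (b : ℝ) * (τ : ℝ) * bInfl grp q H τ T *
        max (bInfl grp q H τ T) (⨆ v : V, bInfl grp q H τ {v}) :=
  bdependence_variance_bound_general grp b hcard htail q hq0 hq1 H hHnn hHmono hHsub τ T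

end BDep
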